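/- Let char K = 0 and A = K + ∑_{i≥2} K x^i (the cusp algebra). The Jacobian-type ideal 𝔞 := ∑_{i≥2} K x^i of A is stable under all K-derivations of A, but is not stable under D(A): the operator w_{-2} = (h+2)(h−1)x^{-2} ∈ D(A) satisfies w_{-2}(x²) = −2 ∉ 𝔞. -/

import Mathlib

/-- The coordinate ring of the cusp: the subalgebra `A = K + ∑_{i ≥ 2} K xⁱ` of `K[x]`,
i.e. (equivalently) the polynomials whose coefficient of `x` vanishes. -/
def cusp (K : Type*) [Field K] : Subalgebra K (Polynomial K) where
  carrier := {p | p.coeff 1 = 0}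
  zero_mem' := by simp
  one_mem' := by simp [Polynomial.coeff_one]
  add_mem' := by
    intro a b ha hb
    simp only [Set.mem_setOf_eq, Polynomial.coeff_add] at *
    rw [ha, hb, add_zero]
  mul_mem' := by
    intro a b ha hb
    simp only [Set.mem_setOf_eq] at *
    rw [Polynomial.coeff_mul, Finset.Nat.sum_antidiagonal_eq_sum_range_succ_mk]
    simp [Finset.sum_range_succ, ha, hb]
  algebraMap_mem' := by
    intro k
    simp [Polynomial.algebraMap_eq, Polynomial.coeff_C]

/-- `A = K + ∑_{i≥2} K xⁱ` viewed inside the Laurent polynomial ring `K[x,x⁻¹]`. -/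
def cuspL (K : Type*) [Field K] : Set (LaurentPolynomial K) :=
  Polynomial.toLaurent '' (cusp K : Set (Polynomial K))

/-- The `K`-linear operator on `K[x,x⁻¹]` sending `xⁿ ↦ f(n)·x^{n+d}`. -/
noncomputable def shiftScale (K : Type*) [Field K] (f : ℤ → K) (d : ℤ) :
    Module.End K (LaurentPolynomial K) :=
  (Finsupp.lsum K fun n : ℤ =>
    LinearMap.toSpanSingleton K (LaurentPolynomial K) (f n • LaurentPolynomial.T (n + d))) ∘ₗ
    (AddMonoidAlgebra.coeffLinearEquiv K).toLinearMap

/-- The operator `h = x·∂` on `K[x,x⁻¹]`, acting by `xⁿ ↦ n·xⁿ`. -/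
noncomputable def hOp (K : Type*) [Field K] : Module.End K (LaurentPolynomial K) :=
  shiftScale K (fun n => (n : K)) 0

/-- Multiplication by `x^d` as a `K`-linear operator on `K[x,x⁻¹]`. -/
noncomputable def xMul (K : Type*) [Field K] (d : ℤ) : Module.End K (LaurentPolynomial K) :=
  LinearMap.mulLeft K (LaurentPolynomial.T d)

open Polynomial in
/-- `P_i(X) = (X-1)·(X+1)(X+2)⋯(X+i-2)·(X+i)`, the polynomial with
`w_{-i} = P_i(h)·x^{-i}`.  (For `i = 2` this is `(X-1)(X+2)`, i.e. `w_{-2} = (h+2)(h-1)x⁻²`.) -/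
noncomputable def Pneg (K : Type*) [Field K] (i : ℕ) : Polynomial K :=
  (X - 1) * (∏ k ∈ Finset.Icc 1 (i - 2), (X + (k : Polynomial K))) * (X + (i : Polynomial K))

open Polynomial in
/-- `Q_i(X) = (X-i-1)·(X-i+1)⋯(X-2)·X`, the polynomial with `xⁱ·w_{-i} = Q_i(h)`. -/
noncomputable def Qneg (K : Type*) [Field K] (i : ℕ) : Polynomial K :=
  (X - ((i : Polynomial K) + 1)) * (∏ k ∈ Finset.Icc 2 (i - 1), (X - (k : Polynomial K))) * X

/-- The element `w_{-i} = (h-1)(h+1)⋯(h+i-2)(h+i)·x^{-i}` of `D(K[x,x⁻¹])`, as an operator. -/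
noncomputable def wneg (K : Type*) [Field K] (i : ℕ) : Module.End K (LaurentPolynomial K) :=
  Polynomial.aeval (hOp K) (Pneg K i) * xMul K (-(i : ℤ))

/-- `w₁ = (h-1)·x`. -/
noncomputable def wone (K : Type*) [Field K] : Module.End K (LaurentPolynomial K) :=
  (hOp K - 1) * xMul K 1

/-- `w₋₁ = (h+1)(h-1)·x⁻¹`. -/
noncomputable def wnegone (K : Type*) [Field K] : Module.End K (LaurentPolynomial K) :=
  (hOp K + 1) * (hOp K - 1) * xMul K (-1)

/-- The Jacobian ideal `𝔞 = ∑_{i≥2} K xⁱ` of the cusp algebra `A`, viewed inside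
`K[x,x⁻¹]`: image of the elements of `A` with zero constant term. -/
def aIdealL (K : Type*) [Field K] : Set (LaurentPolynomial K) :=
  Polynomial.toLaurent '' {p : Polynomial K | p ∈ cusp K ∧ p.coeff 0 = 0}

section Aux

open Polynomial LaurentPolynomial

variable (K : Type*) [Field K]

lemma shiftScale_T (f : ℤ → K) (d n : ℤ) :
    shiftScale K f d (T n) = f n • T (n + d) := by
  have h : (AddMonoidAlgebra.coeffLinearEquiv K) (T n : LaurentPolynomial K) =
      Finsupp.single n 1 := rfl
  rw [shiftScale, LinearMap.comp_apply, LinearEquiv.coe_coe, h]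
  erw [Finsupp.lsum_single, LinearMap.toSpanSingleton_apply, one_smul]

lemma hOp_T (n : ℤ) : hOp K (T n) = (n : K) • T n := by
  rw [hOp, shiftScale_T, add_zero]

lemma hOp_pow_T (k : ℕ) (n : ℤ) : (hOp K ^ k) (T n) = ((n : K) ^ k) • T n := by
  induction k with
  | zero => simp
  | succ k ih =>
    rw [pow_succ, Module.End.mul_apply, hOp_T, map_smul, ih, smul_smul, pow_succ]
    ring_nf

lemma aeval_hOp_T (P : Polynomial K) (n : ℤ) :
    (Polynomial.aeval (hOp K) P) (T n) = P.eval (n : K) • T n := by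
  induction P using Polynomial.induction_on' with
  | add p q hp hq => simp [hp, hq, add_smul]
  | monomial k a =>
    rw [aeval_monomial, Module.End.mul_apply, hOp_pow_T, map_smul, eval_monomial]
    rw [Module.algebraMap_end_apply, smul_smul, mul_comm]

lemma xMul_T (d n : ℤ) : xMul K d (T n) = T (d + n) := by
  rw [xMul, LinearMap.mulLeft_apply, ← T_add]

lemma wneg2_T (n : ℤ) :
    wneg K 2 (T n) = (((n : K) - 3) * (n : K)) • T (n - 2) := by
  rw [wneg, Module.End.mul_apply, xMul_T, aeval_hOp_T]
  have h1 : ((-(2 : ℕ) : ℤ) + n) = n - 2 := by push_cast; ring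
  rw [h1]
  congr 1
  have h2 : ((n - 2 : ℤ) : K) = (n : K) - 2 := by push_cast; ring
  rw [h2, Pneg]
  have h3 : Finset.Icc 1 (2 - 2) = (∅ : Finset ℕ) := by decide
  simp only [h3, Finset.prod_empty, mul_one]
  push_cast
  simp only [eval_mul, eval_add, eval_sub, eval_X, eval_one, eval_ofNat]
  ring

lemma toLaurent_monomial (n : ℕ) (a : K) :
    Polynomial.toLaurent (Polynomial.monomial n a) = a • T (n : ℤ) := by
  rw [← Polynomial.C_mul_X_pow_eq_monomial, Polynomial.toLaurent_C_mul_X_pow]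
  rw [← single_eq_C_mul_T]
  rw [T, AddMonoidAlgebra.smul_single', mul_one]

lemma wneg2_toLaurent (p : Polynomial K) (hp : p.coeff 1 = 0) :
    ∃ q : Polynomial K, q.coeff 1 = 0 ∧
      wneg K 2 (Polynomial.toLaurent p) = Polynomial.toLaurent q := by
  classical
  set N := p.natDegree + 1 with hN
  refine ⟨∑ n ∈ Finset.range N,
      Polynomial.monomial (n - 2) ((((n : K) - 3) * (n : K)) * p.coeff n), ?_, ?_⟩
  · rw [Polynomial.finset_sum_coeff]
    refine Finset.sum_eq_zero fun n _ => ?_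
    rw [Polynomial.coeff_monomial]
    split_ifs with h
    · have hn : n = 3 := by omega
      subst hn; norm_num
    · rfl
  · conv_lhs => rw [p.as_sum_range' N (by omega)]
    rw [map_sum, map_sum, map_sum]
    refine Finset.sum_congr rfl fun n _ => ?_
    rw [toLaurent_monomial, map_smul, wneg2_T, toLaurent_monomial, smul_smul]
    rcases Nat.lt_or_ge n 2 with h | h
    · interval_cases n <;> simp [hp]
    · have : ((n - 2 : ℕ) : ℤ) = (n : ℤ) - 2 := by omega
      rw [this, mul_comm]
      norm_cast

lemma mem_cusp_iff (p : Polynomial K) : p ∈ cusp K ↔ p.coeff 1 = 0 := Iff.rfl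

end Aux

open Polynomial LaurentPolynomial in
set_option synthInstance.maxHeartbeats 1000000 in
set_option maxHeartbeats 1000000 in
lemma deriv_stable {K : Type*} [Field K] [CharZero K]
    (δ : Derivation K (cusp K) (cusp K)) (a : cusp K)
    (ha0 : (a : Polynomial K).coeff 0 = 0) : (δ a : Polynomial K).coeff 0 = 0 := by
  classical
  have hx2m : (X ^ 2 : Polynomial K) ∈ cusp K := by
    rw [mem_cusp_iff]; simp [coeff_X_pow]
  have hx3m : (X ^ 3 : Polynomial K) ∈ cusp K := by
    rw [mem_cusp_iff]; simp [coeff_X_pow]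
  set x2 : cusp K := ⟨X ^ 2, hx2m⟩ with hx2
  set x3 : cusp K := ⟨X ^ 3, hx3m⟩ with hx3
  have hf1 : (δ x2 : Polynomial K).coeff 1 = 0 := (mem_cusp_iff K _).mp (δ x2).2
  have hg1 : (δ x3 : Polynomial K).coeff 1 = 0 := (mem_cusp_iff K _).mp (δ x3).2
  have hrel : x3 ^ 2 = x2 ^ 3 := by
    apply Subtype.ext
    show ((X : Polynomial K) ^ 3) ^ 2 = ((X : Polynomial K) ^ 2) ^ 3
    ring
  have h := congrArg δ hrel
  rw [Derivation.leibniz_pow, Derivation.leibniz_pow] at h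
  have h2 := congrArg (Subtype.val) h
  simp only [smul_eq_mul, pow_one] at h2
  have hpoly : (2 : ℕ) • ((X : Polynomial K) ^ 3 * (δ x3 : Polynomial K))
      = (3 : ℕ) • ((X : Polynomial K) ^ 4 * (δ x2 : Polynomial K)) := by
    have h4 : ((x2 : Polynomial K)) ^ 2 = (X : Polynomial K) ^ 4 := by
      show ((X : Polynomial K) ^ 2) ^ 2 = (X : Polynomial K) ^ 4; ring
    have h2c : ((2 : cusp K) : Polynomial K) = 2 := rfl
    have h3c : ((3 : cusp K) : Polynomial K) = 3 := rfl
    simpa [h4, hx3, h2c, h3c] using h2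
  have hf0 : (δ x2 : Polynomial K).coeff 0 = 0 := by
    have h4 := congrArg (fun p => Polynomial.coeff p 4) hpoly
    simp only [Polynomial.coeff_smul, Polynomial.coeff_X_pow_mul'] at h4
    norm_num [hg1] at h4
    exact h4
  have hg0 : (δ x3 : Polynomial K).coeff 0 = 0 := by
    have h3 := congrArg (fun p => Polynomial.coeff p 3) hpoly
    simp only [Polynomial.coeff_smul, Polynomial.coeff_X_pow_mul'] at h3
    norm_num at h3
    exact h3
  have key : ∀ b : cusp K, (b : Polynomial K).coeff 0 = 0 →
      (b : Polynomial K).coeff 2 = 0 → (b : Polynomial K).coeff 3 = 0 →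
      (δ b : Polynomial K).coeff 0 = 0 := by
    intro b hb0 hb2 hb3
    have hb1 : (b : Polynomial K).coeff 1 = 0 := (mem_cusp_iff K _).mp b.2
    set p : Polynomial K := (b : Polynomial K) with hpb
    set s : Polynomial K := p.divX.divX with hs
    have hps : p = (X : Polynomial K) ^ 2 * s := by
      have h1 : p.divX * X + Polynomial.C (p.coeff 0) = p := p.divX_mul_X_add
      rw [hb0, map_zero, add_zero] at h1
      have h2' : p.divX.divX * X + Polynomial.C (p.divX.coeff 0) = p.divX :=
        p.divX.divX_mul_X_add
      rw [Polynomial.coeff_divX, hb1, map_zero, add_zero] at h2'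
      rw [← h1, ← h2']; ring
    have hs1 : s.coeff 1 = 0 := by
      rw [hs, Polynomial.coeff_divX, Polynomial.coeff_divX]; exact hb3
    have hs0 : s.coeff 0 = 0 := by
      rw [hs, Polynomial.coeff_divX, Polynomial.coeff_divX]; exact hb2
    set S : cusp K := ⟨s, hs1⟩ with hSd
    have hbS : b = x2 * S := by
      apply Subtype.ext
      show p = (X : Polynomial K) ^ 2 * s
      exact hps
    rw [hbS, Derivation.leibniz]
    have hco := congrArg (Subtype.val) (rfl : x2 • δ S + S • δ x2 = x2 • δ S + S • δ x2)
    have hval : ((x2 • δ S + S • δ x2 : cusp K) : Polynomial K)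
        = (X : Polynomial K) ^ 2 * (δ S : Polynomial K) + s * (δ x2 : Polynomial K) := by
      simp only [smul_eq_mul]
      rfl
    rw [hval, Polynomial.coeff_add, Polynomial.mul_coeff_zero, Polynomial.mul_coeff_zero]
    simp [hs0, Polynomial.coeff_X_pow]
  set a2 : K := (a : Polynomial K).coeff 2 with ha2
  set a3 : K := (a : Polynomial K).coeff 3 with ha3
  have hδa : δ a = a2 • δ x2 + a3 • δ x3 + δ (a - (a2 • x2 + a3 • x3)) := by
    rw [map_sub, map_add, Derivation.map_smul, Derivation.map_smul]
    ring
  have hr0 : ((a - (a2 • x2 + a3 • x3) : cusp K) : Polynomial K).coeff 0 = 0 := by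
    simp [Polynomial.coeff_smul, Polynomial.coeff_X_pow, ha0, hx2, hx3]
  have hr2 : ((a - (a2 • x2 + a3 • x3) : cusp K) : Polynomial K).coeff 2 = 0 := by
    simp [Polynomial.coeff_smul, Polynomial.coeff_X_pow, ← ha2, hx2, hx3]
  have hr3 : ((a - (a2 • x2 + a3 • x3) : cusp K) : Polynomial K).coeff 3 = 0 := by
    simp [Polynomial.coeff_smul, Polynomial.coeff_X_pow, ← ha3, hx2, hx3]
  have hkey := key _ hr0 hr2 hr3
  have hfin : ((a2 • δ x2 + a3 • δ x3 + δ (a - (a2 • x2 + a3 • x3)) : cusp K) :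
      Polynomial K).coeff 0 = 0 := by
    push_cast
    rw [Polynomial.coeff_add, Polynomial.coeff_add, Polynomial.coeff_smul,
      Polynomial.coeff_smul, hf0, hg0, hkey]
    simp
  rw [hδa]
  exact hfin

/-- The ideal `𝔞 = ∑_{i≥2} K xⁱ` of the cusp algebra `A` is stable under every
`K`-derivation of `A`, but not under `D(A)`: the differential operator
`w₋₂ = (h+2)(h-1)x⁻²` on `A` satisfies `w₋₂(x²) = -2 ∉ 𝔞`. -/
theorem stmt16 (K : Type*) [Field K] [CharZero K] :
    (∀ δ : Derivation K (cusp K) (cusp K), ∀ a : cusp K,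
        (a : Polynomial K).coeff 0 = 0 → (δ a : Polynomial K).coeff 0 = 0) ∧
    (∀ q ∈ cuspL K, wneg K 2 q ∈ cuspL K) ∧
    Polynomial.toLaurent (Polynomial.X ^ 2 : Polynomial K) ∈ aIdealL K ∧
    wneg K 2 (Polynomial.toLaurent (Polynomial.X ^ 2 : Polynomial K)) =
      Polynomial.toLaurent (Polynomial.C (-2 : K)) ∧
    wneg K 2 (Polynomial.toLaurent (Polynomial.X ^ 2 : Polynomial K)) ∉ aIdealL K := by
    classical
  refine ⟨fun δ a ha => deriv_stable δ a ha, ?_, ?_, ?_, ?_⟩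
  · rintro q ⟨p, hp, rfl⟩
    obtain ⟨q', hq'1, hq'⟩ := wneg2_toLaurent K p ((mem_cusp_iff K p).mp hp)
    exact ⟨q', (mem_cusp_iff K q').mpr hq'1, hq'.symm⟩
  · exact ⟨Polynomial.X ^ 2,
      ⟨(mem_cusp_iff K _).mpr (by simp [Polynomial.coeff_X_pow]),
        by simp [Polynomial.coeff_X_pow]⟩, rfl⟩
  · rw [Polynomial.toLaurent_X_pow, wneg2_T, Polynomial.toLaurent_C]
    have h1 : (((2 : ℕ) : ℤ) - 2) = 0 := by norm_num
    have h2 : ((((2 : ℕ) : ℤ) : K) - 3) * (((2 : ℕ) : ℤ) : K) = -2 := by push_cast; ring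
    rw [h1, h2, LaurentPolynomial.T_zero, LaurentPolynomial.C_eq_algebraMap,
      Algebra.algebraMap_eq_smul_one]
  · rw [Polynomial.toLaurent_X_pow, wneg2_T]
    rintro ⟨p, ⟨hp1, hp0⟩, hpe⟩
    have h2 : ((((2 : ℕ) : ℤ) : K) - 3) * (((2 : ℕ) : ℤ) : K) = -2 := by push_cast; ring
    have h1 : (((2 : ℕ) : ℤ) - 2) = 0 := by norm_num
    rw [h1, h2, LaurentPolynomial.T_zero] at hpe
    have hC : ((-2 : K) • (1 : LaurentPolynomial K)) = Polynomial.toLaurent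
        (Polynomial.C (-2 : K)) := by
      rw [Polynomial.toLaurent_C, LaurentPolynomial.C_eq_algebraMap,
        Algebra.algebraMap_eq_smul_one]
    rw [hC] at hpe
    have := Polynomial.toLaurent_injective hpe
    rw [this] at hp0
    simp at hp0
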